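/- Let S(sp_{2N}) be the symmetric algebra on the symplectic Lie algebra with basis {f^{ab} = f^{ba}}. Let J be the ideal of S(sp_{2N}) generated by all elements Σ_{σ} f^{σ(a)σ(b)} f^{σ(c)σ(d)} (sum over all permutations of the four indices a,b,c,d, i.e., the complete symmetrization of f^{ab}f^{cd} in the four indices), for all 1 ≤ a,b,c,d ≤ 2N. Then in S(sp_{2N})/J every generator f^{ab} is nilpotent; specifically (f^{aa})² ∈ J and (f^{ab})⁴ ∈ J for all a,b. Consequently S(sp_{2N})/J is finite dimensional. -/

import Mathlib

open scoped BigOperators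

noncomputable section

namespace SymSp

variable (k : Type*) [Field k] [CharZero k] (N : ℕ)

/-- The symmetric algebra `S(sp_{2N})`, modeled as the polynomial ring in the variables
`f^{ab} = f^{ba}`, `1 ≤ a ≤ b ≤ 2N`. -/
abbrev SSp := MvPolynomial (Sym2 (Fin (2 * N))) k

/-- The generator `f^{ab} = f^{ba}`. -/
def f (a b : Fin (2 * N)) : SSp k N := MvPolynomial.X s(a, b)

/-- The ideal generated by the complete symmetrizations
`Σ_σ f^{σ(a)σ(b)} f^{σ(c)σ(d)}` over all permutations of the four indices `a,b,c,d`. -/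
def J : Ideal (SSp k N) :=
  Ideal.span
    { g | ∃ a b c d : Fin (2 * N),
        g = ∑ σ : Equiv.Perm (Fin 4),
          f k N (![a, b, c, d] (σ 0)) (![a, b, c, d] (σ 1)) *
          f k N (![a, b, c, d] (σ 2)) (![a, b, c, d] (σ 3)) }

end SymSp

/-!
Specialising the generators to the index pattern `(a,a,b,b)` gives
`8 f^{aa} f^{bb} + 16 (f^{ab})² ∈ J`, and for `b = a` this is `24 (f^{aa})² ∈ J`. Modulo `J`,
`16 (f^{ab})² ≡ -8 f^{aa} f^{bb}`, whose square `64 (f^{aa})² (f^{bb})²` vanishes, so every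
variable is nilpotent in the quotient. An algebra of finite type generated by nilpotent
elements is integral over the base, hence finite.
-/

open MvPolynomial

theorem MvPolynomial.finite_quotient_of_isNilpotent {R σ : Type*} [CommRing R] [Finite σ]
    (I : Ideal (MvPolynomial σ R)) (hX : ∀ s, IsNilpotent (Ideal.Quotient.mk I (X s))) :
    Module.Finite R (MvPolynomial σ R ⧸ I) := by
  have hXint (s : σ) : IsIntegral R (Ideal.Quotient.mk I (X s)) := by
    obtain ⟨n, hn⟩ := hX s
    exact ⟨Polynomial.X ^ n, Polynomial.monic_X_pow n, by simp [hn]⟩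
  have : Algebra.IsIntegral R (MvPolynomial σ R ⧸ I) := by
    refine ⟨fun x => ?_⟩
    obtain ⟨p, rfl⟩ := Ideal.Quotient.mk_surjective x
    induction p using MvPolynomial.induction_on with
    | C a => exact isIntegral_algebraMap
    | add p q hp hq => simpa only [map_add] using hp.add hq
    | mul_X p s hp => simpa only [map_mul] using hp.mul (hXint s)
  exact Algebra.IsIntegral.finite

theorem Ideal.mem_of_natCast_mul_mem {k A : Type*} [Field k] [CharZero k] [CommRing A]
    [Algebra k A] (I : Ideal A) {n : ℕ} (hn : n ≠ 0) {x : A} (h : (n : A) * x ∈ I) : x ∈ I := by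
  have hsmul : (n : k) • x ∈ I.restrictScalars k := by simpa [Algebra.smul_def] using h
  exact (Submodule.smul_mem_iff _ (Nat.cast_ne_zero.mpr hn)).mp hsmul

theorem Fin.sum_perm_four {R : Type*} [AddCommMonoid R] (F : Fin 4 → Fin 4 → Fin 4 → Fin 4 → R) :
    ∑ σ : Equiv.Perm (Fin 4), F (σ 0) (σ 1) (σ 2) (σ 3) =
      F 0 1 2 3 + F 0 1 3 2 + F 0 2 1 3 + F 0 2 3 1 + F 0 3 1 2 + F 0 3 2 1 +
      F 1 0 2 3 + F 1 0 3 2 + F 1 2 0 3 + F 1 2 3 0 + F 1 3 0 2 + F 1 3 2 0 +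
      F 2 0 1 3 + F 2 0 3 1 + F 2 1 0 3 + F 2 1 3 0 + F 2 3 0 1 + F 2 3 1 0 +
      F 3 0 1 2 + F 3 0 2 1 + F 3 1 0 2 + F 3 1 2 0 + F 3 2 0 1 + F 3 2 1 0 := by
  rw [← Equiv.sum_comp (Equiv.Perm.decomposeFin (n := 3)).symm, Fintype.sum_prod_type]
  simp only [← Equiv.sum_comp (Equiv.Perm.decomposeFin (n := 2)).symm, Fintype.sum_prod_type]
  simp only [← Equiv.sum_comp (Equiv.Perm.decomposeFin (n := 1)).symm, Fintype.sum_prod_type]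
  simp only [show (2 : Fin 4) = Fin.succ 1 from rfl, show (3 : Fin 4) = Fin.succ 2 from rfl,
    show (1 : Fin 3) = Fin.succ 0 from rfl, show (2 : Fin 3) = Fin.succ 1 from rfl,
    Equiv.Perm.decomposeFin_symm_apply_zero, Equiv.Perm.decomposeFin_symm_apply_one,
    Equiv.Perm.decomposeFin_symm_apply_succ]
  simp only [Finset.univ_unique, Finset.sum_singleton, Fin.sum_univ_succ]
  norm_num [Equiv.swap_apply_def, Fin.ext_iff, Fin.succAbove,
    show Fin.succ 2 = (3 : Fin 4) from rfl]
  abel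

namespace SymSp

variable {k : Type*} [Field k] {N : ℕ}

theorem f_comm (a b : Fin (2 * N)) : f k N a b = f k N b a := by
  rw [f, f, Sym2.eq_swap]

theorem sum_perm_mem_J (a b c d : Fin (2 * N)) :
    ∑ σ : Equiv.Perm (Fin 4),
      f k N (![a, b, c, d] (σ 0)) (![a, b, c, d] (σ 1)) *
      f k N (![a, b, c, d] (σ 2)) (![a, b, c, d] (σ 3)) ∈ J k N :=
  Ideal.subset_span ⟨a, b, c, d, rfl⟩

theorem symmetrization_aabb_mem_J (a b : Fin (2 * N)) :
    8 * (f k N a a * f k N b b) + 16 * f k N a b ^ 2 ∈ J k N := by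
  have hgen := sum_perm_mem_J (k := k) a a b b
  rw [Fin.sum_perm_four fun i j l m =>
    f k N (![a, a, b, b] i) (![a, a, b, b] j) * f k N (![a, a, b, b] l) (![a, a, b, b] m)] at hgen
  convert hgen using 1
  simp only [Matrix.cons_val, f_comm b a]
  ring

variable [CharZero k]

theorem f_diag_sq_mem_J (a : Fin (2 * N)) : f k N a a ^ 2 ∈ J k N := by
  refine (J k N).mem_of_natCast_mul_mem (k := k) (n := 24) (by norm_num) ?_
  convert symmetrization_aabb_mem_J (k := k) a a using 1
  push_cast
  ring

theorem f_pow_four_mem_J (a b : Fin (2 * N)) : f k N a b ^ 4 ∈ J k N := by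
  set S := 8 * (f k N a a * f k N b b) + 16 * f k N a b ^ 2
  have hS : S ∈ J k N := symmetrization_aabb_mem_J a b
  have key : (256 : SSp k N) * f k N a b ^ 4 =
      (S - 16 * (f k N a a * f k N b b)) * S + 64 * f k N b b ^ 2 * f k N a a ^ 2 := by
    ring
  refine (J k N).mem_of_natCast_mul_mem (k := k) (n := 256) (by norm_num) ?_
  push_cast
  rw [key]
  exact add_mem ((J k N).mul_mem_left _ hS) ((J k N).mul_mem_left _ (f_diag_sq_mem_J a))

end SymSp

/-- Let `S(sp_{2N})` be the symmetric algebra on the symplectic Lie algebra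
with basis `{f^{ab} = f^{ba}}`, and let `J` be the ideal generated by the complete
symmetrizations of `f^{ab} f^{cd}` in the four indices.  Then in `S(sp_{2N})/J` every
generator `f^{ab}` is nilpotent; specifically `(f^{aa})² ∈ J` and `(f^{ab})⁴ ∈ J` for all
`a, b`.  Consequently `S(sp_{2N})/J` is finite dimensional. -/
theorem symmetric_algebra_quotient_finite (k : Type*) [Field k] [CharZero k] (N : ℕ) :
    (∀ a : Fin (2 * N), (SymSp.f k N a a) ^ 2 ∈ SymSp.J k N) ∧
    (∀ a b : Fin (2 * N), (SymSp.f k N a b) ^ 4 ∈ SymSp.J k N) ∧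
    FiniteDimensional k (SymSp.SSp k N ⧸ SymSp.J k N) := by
  refine ⟨SymSp.f_diag_sq_mem_J, SymSp.f_pow_four_mem_J,
    MvPolynomial.finite_quotient_of_isNilpotent _ fun s => ⟨4, ?_⟩⟩
  rw [← map_pow, Ideal.Quotient.eq_zero_iff_mem]
  induction s using Sym2.ind with
  | _ a b => exact SymSp.f_pow_four_mem_J a b
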